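/- arXiv:1512.09161 — 3 statements merged into one kernel-verified Lean document; each statement's English description precedes it below -/
import Mathlib

section
/- For every k ≥ 1, the conditional expectation of the identity given the set A_k = ∪_{j=k}^∞ J_j equals 1 − (1/2)·3^{−(k−1)}; that is, (∫_{A_k} x dP(x)) / P(A_k) = 1 − 1/(2·3^{k−1}). -/
open MeasureTheory Set
open scoped ENNReal

noncomputable section

/-- The similarity map `S_j(x) = x/3^j + 1 - 1/3^(j-1)`. -/
def Smap (j : ℕ) (x : ℝ) : ℝ := x / 3 ^ j + 1 - 1 / 3 ^ (j - 1)

/-- The similarity ratio `s_j = 3^(-j)`. -/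
def srat (j : ℕ) : ℝ := (3 : ℝ)⁻¹ ^ j

/-- The probability `p_j = 2^(-j)`. -/
def prob (j : ℕ) : ℝ := (2 : ℝ)⁻¹ ^ j

/-- `J_j = S_j([0,1])`. -/
def Jset (j : ℕ) : Set ℝ := Smap j '' Set.Icc 0 1

/-- For a word `ω = ω₁⋯ω_n`, `S_ω = S_{ω₁} ∘ ⋯ ∘ S_{ω_n}`. -/
def Sword : List ℕ → ℝ → ℝ
  | [] => id
  | j :: ω => Smap j ∘ Sword ω

/-- `s_ω = s_{ω₁} ⋯ s_{ω_n}`. -/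
def sword (ω : List ℕ) : ℝ := (ω.map srat).prod

/-- `p_ω = p_{ω₁} ⋯ p_{ω_n}`. -/
def pword (ω : List ℕ) : ℝ := (ω.map prob).prod

/-- `J_ω = S_ω([0,1])`. -/
def Jword (ω : List ℕ) : Set ℝ := Sword ω '' Set.Icc 0 1

/-- `ω⁻(ω_{|ω|} + j)` : the word obtained from `ω` by increasing its last letter by `j`. -/
def wordInc (ω : List ℕ) (j : ℕ) : List ℕ := ω.dropLast ++ [ω.getLastD 1 + j]

/-- `a(ω) = S_ω(1/2)`. -/
def aw (ω : List ℕ) : ℝ := Sword ω (1 / 2)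

/-- `a(ω, ∞) = S_{ω⁻(ω_{|ω|}+1)}(1/2) + s_{ω⁻(ω_{|ω|}+1)}`. -/
def awInf (ω : List ℕ) : ℝ := Sword (wordInc ω 1) (1 / 2) + sword (wordInc ω 1)

/-- `J_{(ω,∞)} = ⋃_{j ≥ 1} J_{ω⁻(ω_{|ω|}+j)}`. -/
def JwordInf (ω : List ℕ) : Set ℝ := ⋃ j : ℕ, Jword (wordInc ω (j + 1))

/-- A (nonempty) word over the alphabet `ℕ = {1, 2, 3, …}`. -/
def IsWord (ω : List ℕ) : Prop := ω ≠ [] ∧ ∀ i ∈ ω, 1 ≤ i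

/-- The self-similarity equation `P = ∑_{j=1}^∞ 2^{-j} · P ∘ S_j^{-1}`. -/
def SelfSim (P : Measure ℝ) : Prop :=
  P = Measure.sum fun j : ℕ => ((2 : ℝ≥0∞) ^ (j + 1))⁻¹ • P.map (Smap (j + 1))

/-- The distortion error `∫ min_{a ∈ A} (x - a)² dP(x)` of a set `A` of points. -/
def err (P : Measure ℝ) (A : Set ℝ) : ℝ :=
  ∫ x, sInf ((fun a => (x - a) ^ 2) '' A) ∂P

/-- The `n`-th quantization error. -/
def quantErr (P : Measure ℝ) (n : ℕ) : ℝ :=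
  sInf {v | ∃ A : Set ℝ, A.Finite ∧ A.Nonempty ∧ A.ncard ≤ n ∧ v = err P A}

/-- An optimal set of `n`-means. -/
def IsOptimal (P : Measure ℝ) (n : ℕ) (A : Set ℝ) : Prop :=
  A.Finite ∧ A.Nonempty ∧ A.ncard ≤ n ∧ err P A = quantErr P n

/-- The Voronoi region of `a` with respect to `A`. -/
def voronoi (A : Set ℝ) (a : ℝ) : Set ℝ := {x | ∀ b ∈ A, |x - a| ≤ |x - b|}

/-- `α(ℓ) = {a(ω) : p_ω = 2^{-ℓ}} ∪ {a(ω,∞) : p_ω = 2^{-ℓ}}`. -/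
def alphaSet (l : ℕ) : Set ℝ :=
  {x | ∃ ω : List ℕ, IsWord ω ∧ pword ω = (2 : ℝ)⁻¹ ^ l ∧ (x = aw ω ∨ x = awInf ω)}

/-- The set `α_n(I)` built from `α(ℓ)` and `I ⊆ α(ℓ)`. -/
def alphaNI (l : ℕ) (I : Set ℝ) : Set ℝ :=
  (alphaSet l \ I)
    ∪ {x | ∃ ω : List ℕ, IsWord ω ∧ pword ω = (2 : ℝ)⁻¹ ^ l ∧ aw ω ∈ I ∧
        (x = aw (ω ++ [1]) ∨ x = awInf (ω ++ [1]))}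
    ∪ {x | ∃ ω : List ℕ, IsWord ω ∧ pword ω = (2 : ℝ)⁻¹ ^ l ∧ awInf ω ∈ I ∧
        (x = aw (wordInc ω 1) ∨ x = awInf (wordInc ω 1))}

/-!
Each piece `P ∘ S_j⁻¹` of the self-similarity equation is carried by `J_j`, and the intervals
`J_j` are pairwise disjoint and increase with `j`; so `P` restricted to `A_k` is
`∑_{j ≥ k} 2^{-j} P ∘ S_j⁻¹`. Hence `P(A_k) = 2^{1-k}` and
`∫_{A_k} x dP = ∑_{j ≥ k} 2^{-j} (E / 3^j + 1 - 3^{1-j})`, where the mean `E = ∫ x dP` is `1/2`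
by the same equation for `k = 1`. Summing the geometric series gives the claim.
-/

lemma integral_sum_smul_map {α β ι : Type*} [MeasurableSpace α] [MeasurableSpace β] [Countable ι]
    (μ : Measure α) (c : ι → ℝ≥0∞) {φ : ι → α → β} (hφ : ∀ i, Measurable (φ i)) {f : β → ℝ}
    (hfm : Measurable f) (hf : Integrable f (Measure.sum fun i => c i • μ.map (φ i))) :
    ∫ y, f y ∂(Measure.sum fun i => c i • μ.map (φ i))
      = ∑' i, (c i).toReal * ∫ x, f (φ i x) ∂μ := by
  rw [integral_sum_measure hf]
  refine tsum_congr fun i => ?_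
  rw [integral_smul_measure, integral_map (hφ i).aemeasurable hfm.aestronglyMeasurable,
    smul_eq_mul]

lemma tsum_mul_pow_add_mul_pow {r s : ℝ} (hr₀ : 0 ≤ r) (hr₁ : r < 1) (hs₀ : 0 ≤ s) (hs₁ : s < 1)
    (a b : ℝ) : ∑' i : ℕ, (a * r ^ i + b * s ^ i) = a * (1 - r)⁻¹ + b * (1 - s)⁻¹ := by
  rw [Summable.tsum_add ((summable_geometric_of_lt_one hr₀ hr₁).mul_left a)
      ((summable_geometric_of_lt_one hs₀ hs₁).mul_left b),
    tsum_mul_left, tsum_mul_left, tsum_geometric_of_lt_one hr₀ hr₁,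
    tsum_geometric_of_lt_one hs₀ hs₁]

lemma six_pow (n : ℕ) : (6 : ℝ) ^ n = 2 ^ n * 3 ^ n := by
  rw [← mul_pow]
  norm_num

lemma integrable_id_of_ae_mem_Icc {μ : Measure ℝ} [IsFiniteMeasure μ] {a b : ℝ}
    (h : ∀ᵐ x ∂μ, x ∈ Icc a b) : Integrable (fun x => x) μ :=
  .of_bound measurable_id.aestronglyMeasurable (max |a| |b|)
    (h.mono fun _ hx => abs_le_max_abs_abs hx.1 hx.2)

lemma Smap_succ (j : ℕ) (x : ℝ) : Smap (j + 1) x = x / 3 ^ (j + 1) + (1 - 1 / 3 ^ j) := by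
  rw [Smap, Nat.add_sub_cancel]
  ring

lemma measurable_Smap (j : ℕ) : Measurable (Smap j) := by
  unfold Smap
  fun_prop

lemma isCompact_Jset (j : ℕ) : IsCompact (Jset j) :=
  isCompact_Icc.image (by unfold Smap; fun_prop)

lemma Jset_succ_subset_Icc (j : ℕ) :
    Jset (j + 1) ⊆ Icc (1 - 1 / 3 ^ j) (1 - 1 / 3 ^ j + 1 / 3 ^ (j + 1)) := by
  rintro _ ⟨t, ⟨ht0, ht1⟩, rfl⟩
  rw [Smap_succ]
  have h3 : (0 : ℝ) < 3 ^ (j + 1) := by positivity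
  constructor
  · linarith [div_nonneg ht0 h3.le]
  · linarith [div_le_div_of_nonneg_right ht1 h3.le]

lemma Jset_lt_Jset {j n : ℕ} (hjn : j < n) {x y : ℝ} (hx : x ∈ Jset (j + 1))
    (hy : y ∈ Jset (n + 1)) : x < y := by
  have hx' := (Jset_succ_subset_Icc j hx).2
  have hy' := (Jset_succ_subset_Icc n hy).1
  have h3 : (1 : ℝ) / 3 ^ j = 3 * (1 / 3 ^ (j + 1)) := by
    rw [pow_succ]
    field_simp
  have hpos : (0 : ℝ) < 1 / 3 ^ (j + 1) := by positivity
  have hn : 1 / (3 : ℝ) ^ n ≤ 1 / 3 ^ (j + 1) :=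
    one_div_le_one_div_of_le (by positivity) (pow_le_pow_right₀ (by norm_num) hjn)
  linarith

/-- The paper's `A_k = ⋃_{j ≥ k} J_j`. -/
def Jtail (k : ℕ) : Set ℝ := ⋃ j ∈ {j : ℕ | k ≤ j}, Jset j

lemma measurableSet_Jtail (k : ℕ) : MeasurableSet (Jtail k) :=
  .biUnion (to_countable _) fun j _ => (isCompact_Jset j).measurableSet

lemma Jset_subset_Jtail {j k : ℕ} (h : k ≤ j) : Jset j ⊆ Jtail k :=
  subset_biUnion_of_mem (u := Jset) h

lemma disjoint_Jset_Jtail {j m : ℕ} (h : j < m) : Disjoint (Jset (j + 1)) (Jtail (m + 1)) := by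
  rw [Set.disjoint_left]
  intro x hx hxA
  simp only [Jtail, mem_iUnion₂, mem_ofPred_eq] at hxA
  obtain ⟨n, hn, hxn⟩ := hxA
  obtain ⟨n, rfl⟩ : ∃ n', n = n' + 1 := ⟨n - 1, by omega⟩
  exact lt_irrefl x (Jset_lt_Jset (by omega) hx hxn)

section SelfSimilar

variable {P : Measure ℝ}

lemma ae_map_Smap_mem_Jset (hP : ∀ᵐ x ∂P, x ∈ Icc 0 1) (j : ℕ) :
    ∀ᵐ y ∂P.map (Smap j), y ∈ Jset j :=
  (ae_map_iff (measurable_Smap j).aemeasurable (isCompact_Jset j).measurableSet).2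
    (hP.mono fun _ hx => mem_image_of_mem _ hx)

lemma restrict_map_Smap_Jtail (hP : ∀ᵐ x ∂P, x ∈ Icc 0 1) (j m : ℕ) :
    (P.map (Smap (j + 1))).restrict (Jtail (m + 1))
      = if m ≤ j then P.map (Smap (j + 1)) else 0 := by
  split_ifs with h
  · exact Measure.restrict_eq_self_of_ae_mem
      ((ae_map_Smap_mem_Jset hP _).mono fun _ hy => Jset_subset_Jtail (by omega) hy)
  · rw [Measure.restrict_eq_zero]
    exact measure_mono_null (disjoint_Jset_Jtail (by omega)).subset_compl_left
      (ae_map_Smap_mem_Jset hP _)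

lemma restrict_Jtail_eq (hP : ∀ᵐ x ∂P, x ∈ Icc 0 1) (hself : SelfSim P) (m : ℕ) :
    P.restrict (Jtail (m + 1))
      = Measure.sum fun i : ℕ => ((2 : ℝ≥0∞) ^ (i + m + 1))⁻¹ • P.map (Smap (i + m + 1)) := by
  ext s hs
  conv_lhs => rw [hself]
  rw [Measure.restrict_sum _ (measurableSet_Jtail _), Measure.sum_apply _ hs,
    Measure.sum_apply _ hs, ← (add_left_injective m).tsum_eq]
  · refine tsum_congr fun i => ?_
    rw [Measure.restrict_smul, restrict_map_Smap_Jtail hP, if_pos (Nat.le_add_left m i)]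
  · intro j hj
    by_contra hjm
    refine hj ?_
    dsimp only
    rw [Measure.restrict_smul, restrict_map_Smap_Jtail hP,
      if_neg fun h => hjm ⟨j - m, Nat.sub_add_cancel h⟩]
    simp

lemma integral_Smap_succ [IsProbabilityMeasure P] (hint : Integrable (fun x => x) P) (j : ℕ) :
    ∫ x, Smap (j + 1) x ∂P = (∫ x, x ∂P) / 3 ^ (j + 1) + (1 - 1 / 3 ^ j) := by
  simp_rw [Smap_succ]
  rw [integral_add (hint.div_const _) (integrable_const _), integral_div, integral_const]
  simp

/-- The self-similarity equation gives `E = ∑ 2^{-j} (E / 3^j + 1 - 3^{1-j}) = E / 5 + 2 / 5`. -/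
lemma integral_id_eq_half [IsProbabilityMeasure P] (hP : ∀ᵐ x ∂P, x ∈ Icc 0 1)
    (hself : SelfSim P) : ∫ x, x ∂P = 1 / 2 := by
  have hint := integrable_id_of_ae_mem_Icc hP
  have h := integral_sum_smul_map P _ (fun i => measurable_Smap (i + 1)) (f := fun x => x)
    measurable_id (hself ▸ hint)
  rw [← hself] at h
  have hterm : ∀ i : ℕ, (((2 : ℝ≥0∞) ^ (i + 1))⁻¹).toReal * ∫ x, Smap (i + 1) x ∂P
      = ((∫ x, x ∂P) / 6 - 1 / 2) * (6 : ℝ)⁻¹ ^ i + 1 / 2 * (2 : ℝ)⁻¹ ^ i := by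
    intro i
    simp only [integral_Smap_succ hint, ENNReal.toReal_inv, ENNReal.toReal_pow,
      ENNReal.toReal_ofNat, inv_pow, six_pow]
    field_simp
    ring
  rw [tsum_congr hterm, tsum_mul_pow_add_mul_pow (by norm_num) (by norm_num) (by norm_num)
    (by norm_num)] at h
  linarith

lemma setIntegral_Jtail (hP : ∀ᵐ x ∂P, x ∈ Icc 0 1) (hself : SelfSim P) {f : ℝ → ℝ}
    (hfm : Measurable f) (hf : Integrable f P) (m : ℕ) :
    ∫ x in Jtail (m + 1), f x ∂P
      = ∑' i : ℕ, ((2 : ℝ) ^ (i + m + 1))⁻¹ * ∫ x, f (Smap (i + m + 1) x) ∂P := by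
  have hsum := restrict_Jtail_eq hP hself m
  rw [hsum, integral_sum_smul_map P _ (fun i => measurable_Smap _) hfm (hsum ▸ hf.restrict)]
  simp only [ENNReal.toReal_inv, ENNReal.toReal_pow, ENNReal.toReal_ofNat]

lemma measureReal_Jtail [IsProbabilityMeasure P] (hP : ∀ᵐ x ∂P, x ∈ Icc 0 1)
    (hself : SelfSim P) (m : ℕ) : P.real (Jtail (m + 1)) = (2 ^ m)⁻¹ := by
  have h := setIntegral_Jtail hP hself measurable_const (integrable_const (1 : ℝ)) m
  have hterm : ∀ i : ℕ, ((2 : ℝ) ^ (i + m + 1))⁻¹ * ∫ _, (1 : ℝ) ∂P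
      = (2 ^ (m + 1))⁻¹ * (2 : ℝ)⁻¹ ^ i := by
    intro i
    rw [integral_const, probReal_univ, one_smul, mul_one, inv_pow, ← mul_inv, ← pow_add,
      show m + 1 + i = i + m + 1 by ring]
  rw [setIntegral_const, smul_eq_mul, mul_one, tsum_congr hterm, tsum_mul_left,
    tsum_geometric_inv_two] at h
  rw [h, pow_succ]
  field_simp

lemma setIntegral_id_Jtail [IsProbabilityMeasure P] (hP : ∀ᵐ x ∂P, x ∈ Icc 0 1)
    (hself : SelfSim P) (m : ℕ) : ∫ x in Jtail (m + 1), x ∂P = (2 ^ m)⁻¹ - (2 * 6 ^ m)⁻¹ := by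
  have hint := integrable_id_of_ae_mem_Icc hP
  have h := setIntegral_Jtail hP hself (f := fun x => x) measurable_id hint m
  have hterm : ∀ i : ℕ, ((2 : ℝ) ^ (i + m + 1))⁻¹ * ∫ x, Smap (i + m + 1) x ∂P
      = -(5 / 12 * (6 ^ m)⁻¹) * (6 : ℝ)⁻¹ ^ i + (2 ^ (m + 1))⁻¹ * (2 : ℝ)⁻¹ ^ i := by
    intro i
    simp only [integral_Smap_succ hint, integral_id_eq_half hP hself, inv_pow, six_pow]
    field_simp
    ring
  rw [h, tsum_congr hterm, tsum_mul_pow_add_mul_pow (by norm_num) (by norm_num) (by norm_num)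
    (by norm_num), pow_succ]
  field_simp
  ring

end SelfSimilar

theorem conditional_expectation_tail (P : Measure ℝ) [IsProbabilityMeasure P]
    (hsupp : P (Set.Icc 0 1) = 1) (hself : SelfSim P) (k : ℕ) (hk : 1 ≤ k) :
    (∫ x in ⋃ j ∈ {j : ℕ | k ≤ j}, Jset j, x ∂P)
        / (P (⋃ j ∈ {j : ℕ | k ≤ j}, Jset j)).toReal
      = 1 - 1 / (2 * 3 ^ (k - 1)) := by
  obtain ⟨m, rfl⟩ : ∃ m, k = m + 1 := ⟨k - 1, by omega⟩
  have hP : ∀ᵐ x ∂P, x ∈ Icc 0 1 := (mem_ae_iff_prob_eq_one measurableSet_Icc).2 hsupp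
  change (∫ x in Jtail (m + 1), x ∂P) / P.real (Jtail (m + 1)) = _
  rw [setIntegral_id_Jtail hP hself, measureReal_Jtail hP hself, Nat.add_sub_cancel, six_pow]
  field_simp
end
end

section
/- For every nonempty finite word ω of positive integers, ∫_{J_ω} (x − a(ω))² dP(x) = ∫_{J_{(ω,∞)}} (x − a(ω,∞))² dP(x) = p_ω · s_ω² · (1/8). -/
open MeasureTheory Set
open scoped ENNReal

noncomputable section

/-!
Restricting the self-similarity equation to `J_ω`, and using that the first-level pieces
`J_j = S_j([0,1])` are pairwise disjoint, gives `P|_{J_ω} = p_ω • (S_ω)_* P`. Writing `ω = σm`,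
the maps `S_{m+t}` factor as `U_m ∘ S_t` with `U_m x = 3^{-m} x + 1 - 3^{-m}`, so likewise
`P|_{J_{(ω,∞)}} = p_σ 2^{-m} • (S_σ ∘ U_m)_* P`, while `a(ω,∞) = S_σ (U_m (1/2))`. Both integrals
are therefore `p_ω s_ω² ∫ (x - 1/2)² dP`. Finally, self-similarity yields `∫ (x - 1/2) dP = 0`
and `∫ (x - 1/2)² dP = 1/8`, using `∑ 6^{-j} = 1/5` and `∑ 18^{-j} = 1/17` over `j ≥ 1`.
-/

lemma srat_pos (j : ℕ) : 0 < srat j := by unfold srat; positivity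

lemma sword_pos (ω : List ℕ) : 0 < sword ω :=
  List.prod_pos fun _ hx => by
    obtain ⟨j, -, rfl⟩ := List.mem_map.mp hx
    exact srat_pos j

lemma prob_nonneg (j : ℕ) : 0 ≤ prob j := by unfold prob; positivity

lemma pword_nonneg (ω : List ℕ) : 0 ≤ pword ω :=
  List.prod_nonneg fun _ hx => by
    obtain ⟨j, -, rfl⟩ := List.mem_map.mp hx
    exact prob_nonneg j

lemma prob_add (m n : ℕ) : prob (m + n) = prob m * prob n := pow_add _ _ _

lemma srat_add (m n : ℕ) : srat (m + n) = srat m * srat n := pow_add _ _ _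

lemma Smap_eq (j : ℕ) (hj : 1 ≤ j) (x : ℝ) : Smap j x = srat j * x + 1 - 3 * srat j := by
  obtain ⟨k, rfl⟩ := Nat.exists_eq_add_of_le hj
  simp only [Smap, srat, Nat.add_sub_cancel_left, inv_pow, one_div, pow_add]
  field_simp

lemma Smap_sub (j : ℕ) (x y : ℝ) : Smap j x - Smap j y = srat j * (x - y) := by
  simp only [Smap, srat, inv_pow]
  ring

lemma Sword_sub (ω : List ℕ) (x y : ℝ) : Sword ω x - Sword ω y = sword ω * (x - y) := by
  induction ω with
  | nil => simp [Sword, sword]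
  | cons j ω ih =>
    simp only [Sword, Function.comp_apply, Smap_sub, ih, sword, List.map_cons, List.prod_cons]
    ring

lemma Sword_append (σ τ : List ℕ) (x : ℝ) : Sword (σ ++ τ) x = Sword σ (Sword τ x) := by
  induction σ with
  | nil => rfl
  | cons j σ ih => simp [Sword, ih]

lemma Sword_concat (σ : List ℕ) (m : ℕ) : Sword (σ ++ [m]) = Sword σ ∘ Smap m :=
  funext fun x => Sword_append σ [m] x

lemma pword_concat (σ : List ℕ) (m : ℕ) : pword (σ ++ [m]) = pword σ * prob m := by
  simp [pword]

lemma sword_concat (σ : List ℕ) (m : ℕ) : sword (σ ++ [m]) = sword σ * srat m := by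
  simp [sword]

lemma wordInc_concat (σ : List ℕ) (m j : ℕ) : wordInc (σ ++ [m]) j = σ ++ [m + j] := by
  rw [wordInc, List.dropLast_concat, List.getLastD_concat]

lemma measurableEmbedding_of_sub_eq_mul {T : ℝ → ℝ} {r : ℝ} (hr : r ≠ 0)
    (hT : ∀ x y, T x - T y = r * (x - y)) : MeasurableEmbedding T := by
  have hT' : T = fun x => r * x + T 0 := funext fun x => by linarith [hT x 0]
  refine Continuous.measurableEmbedding (by rw [hT']; fun_prop) fun x y hxy => ?_
  have := hT x y
  rw [hxy, sub_self, eq_comm, mul_eq_zero, sub_eq_zero] at this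
  exact this.resolve_left hr

lemma measurableEmbedding_Smap (j : ℕ) : MeasurableEmbedding (Smap j) :=
  measurableEmbedding_of_sub_eq_mul (srat_pos j).ne' (Smap_sub j)

lemma measurableEmbedding_Sword (ω : List ℕ) : MeasurableEmbedding (Sword ω) :=
  measurableEmbedding_of_sub_eq_mul (sword_pos ω).ne' (Sword_sub ω)

lemma Smap_mem_Icc {j : ℕ} (hj : 1 ≤ j) {x : ℝ} (hx : x ∈ Icc (0 : ℝ) 1) :
    Smap j x ∈ Icc (1 - 3 * srat j) (1 - 2 * srat j) := by
  rw [Smap_eq j hj]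
  have := srat_pos j
  constructor <;> nlinarith [hx.1, hx.2]

lemma Smap_lt_Smap {j k : ℕ} (hj : 1 ≤ j) (hjk : j < k) {x y : ℝ}
    (hx : x ∈ Icc (0 : ℝ) 1) (hy : y ∈ Icc (0 : ℝ) 1) : Smap j x < Smap k y := by
  have hk : srat k * 3 ≤ srat j := by
    obtain ⟨d, rfl⟩ := Nat.exists_eq_add_of_lt hjk
    have hd : srat d ≤ 1 := pow_le_one₀ (by norm_num) (by norm_num)
    have := srat_pos j
    rw [srat_add, srat_add, show srat 1 = 3⁻¹ by simp [srat]]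
    nlinarith
  have := srat_pos j
  linarith [(Smap_mem_Icc hj hx).2, (Smap_mem_Icc (hj.trans hjk.le) hy).1]

lemma Smap_mem_Icc_zero_one {j : ℕ} (hj : 1 ≤ j) {x : ℝ} (hx : x ∈ Icc (0 : ℝ) 1) :
    Smap j x ∈ Icc (0 : ℝ) 1 := by
  have h₁ : srat j ≤ 3⁻¹ := pow_le_of_le_one (by norm_num) (by norm_num) (by omega)
  have h₀ := srat_pos j
  have := Smap_mem_Icc hj hx
  exact ⟨by linarith [this.1], by linarith [this.2]⟩

lemma Sword_mem_Icc {ω : List ℕ} (hω : ∀ i ∈ ω, 1 ≤ i) {x : ℝ} (hx : x ∈ Icc (0 : ℝ) 1) :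
    Sword ω x ∈ Icc (0 : ℝ) 1 := by
  induction ω with
  | nil => exact hx
  | cons j ω ih =>
    exact Smap_mem_Icc_zero_one (hω j List.mem_cons_self)
      (ih fun i hi => hω i (List.mem_cons_of_mem j hi))

lemma Jset_disjoint {j k : ℕ} (hj : 1 ≤ j) (hk : 1 ≤ k) (hjk : j ≠ k) :
    Disjoint (Jset j) (Jset k) := by
  wlog h : j < k generalizing j k
  · exact (this hk hj hjk.symm (by omega)).symm
  rw [Set.disjoint_left]
  rintro _ ⟨x, hx, rfl⟩ ⟨y, hy, hxy⟩
  exact (Smap_lt_Smap hj h hx hy).ne hxy.symm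

/-- `U_m x = 3^{-m} x + 1 - 3^{-m}`. Since `S_{m+t} = U_m ∘ S_t` (`Smap_add`), `U_m` carries
`⋃_{t ≥ 1} J_t` onto `⋃_{t ≥ 1} J_{m+t}`. -/
def tailMap (m : ℕ) (x : ℝ) : ℝ := srat m * x + 1 - srat m

lemma tailMap_sub (m : ℕ) (x y : ℝ) : tailMap m x - tailMap m y = srat m * (x - y) := by
  unfold tailMap; ring

lemma measurableEmbedding_tailMap (m : ℕ) : MeasurableEmbedding (tailMap m) :=
  measurableEmbedding_of_sub_eq_mul (srat_pos m).ne' (tailMap_sub m)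

lemma Smap_add (m : ℕ) {t : ℕ} (ht : 1 ≤ t) (x : ℝ) : Smap (m + t) x = tailMap m (Smap t x) := by
  rw [Smap_eq _ (by omega), Smap_eq _ ht, tailMap, srat_add]
  ring

lemma Smap_half_sub_half (j : ℕ) : Smap (j + 1) (1 / 2) - 1 / 2 = 1 / 2 - 5 / 2 * srat (j + 1) := by
  rw [Smap_eq _ (by omega)]
  ring

lemma awInf_concat (σ : List ℕ) (m : ℕ) : awInf (σ ++ [m]) = Sword σ (tailMap m (1 / 2)) := by
  have h : tailMap m (1 / 2) = Smap (m + 1) (1 / 2) + srat (m + 1) := by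
    rw [Smap_eq _ (by omega), tailMap, srat_add, show srat 1 = 3⁻¹ by simp [srat]]
    ring
  rw [awInf, wordInc_concat, Sword_concat, Function.comp_apply, sword_concat, h]
  linarith [Sword_sub σ (Smap (m + 1) (1 / 2) + srat (m + 1)) (Smap (m + 1) (1 / 2))]

lemma JwordInf_concat (σ : List ℕ) (m : ℕ) :
    JwordInf (σ ++ [m]) = Sword σ '' ⋃ t : ℕ, Jset (m + (t + 1)) := by
  simp only [JwordInf, image_iUnion, wordInc_concat, Jword, Jset, Sword_concat, image_comp]

lemma MeasureTheory.Measure.sum_eq_single {α : Type*} [MeasurableSpace α] {μ : ℕ → Measure α}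
    (i : ℕ) (h : ∀ k ≠ i, μ k = 0) : Measure.sum μ = μ i := by
  ext s hs
  rw [Measure.sum_apply _ hs, tsum_eq_single i fun k hk => by simp [h k hk]]

lemma MeasureTheory.Measure.smul_sum {α : Type*} [MeasurableSpace α] {ι : Type*}
    (c : ℝ≥0∞) (μ : ι → Measure α) : c • Measure.sum μ = Measure.sum fun i => c • μ i := by
  ext s hs
  simp [Measure.sum_apply _ hs, ENNReal.tsum_mul_left]

lemma ofReal_prob (j : ℕ) : ENNReal.ofReal (prob j) = ((2 : ℝ≥0∞) ^ j)⁻¹ := by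
  rw [prob, ENNReal.ofReal_pow (by norm_num), ENNReal.ofReal_inv_of_pos (by norm_num),
    ENNReal.ofReal_ofNat, ENNReal.inv_pow]

lemma integral_ofReal_smul_map {P : Measure ℝ} {T : ℝ → ℝ} (hT : MeasurableEmbedding T)
    {c : ℝ} (hc : 0 ≤ c) (f : ℝ → ℝ) :
    ∫ x, f x ∂(ENNReal.ofReal c • P.map T) = c * ∫ x, f (T x) ∂P := by
  rw [integral_smul_measure, hT.integral_map, ENNReal.toReal_ofReal hc, smul_eq_mul]

lemma hasSum_geometric_succ {r : ℝ} (h₀ : 0 ≤ r) (h₁ : r < 1) :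
    HasSum (fun j : ℕ => r ^ (j + 1)) (r / (1 - r)) := by
  simpa only [pow_succ', div_eq_mul_inv] using (hasSum_geometric_of_lt_one h₀ h₁).mul_left r

lemma SelfSim.eq_sum_ofReal_prob {P : Measure ℝ} (hself : SelfSim P) :
    P = Measure.sum fun j : ℕ => ENNReal.ofReal (prob (j + 1)) • P.map (Smap (j + 1)) := by
  simp only [ofReal_prob]
  exact hself

section SupportedOnUnitInterval

variable {P : Measure ℝ} (hP : ∀ᵐ x ∂P, x ∈ Icc (0 : ℝ) 1)
include hP

lemma Continuous.integrable_of_ae_mem_Icc [IsFiniteMeasure P] {f : ℝ → ℝ} (hf : Continuous f) :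
    Integrable f P := by
  rw [← Measure.restrict_eq_self_of_ae_mem hP]
  exact hf.continuousOn.integrableOn_compact isCompact_Icc

variable [IsProbabilityMeasure P] {T : ℝ → ℝ} {r : ℝ} (hT : ∀ x y, T x - T y = r * (x - y))
include hT

lemma integral_sub_of_sub_eq_mul (b : ℝ) :
    ∫ x, (T x - b) ∂P = r * ∫ x, (x - 1 / 2) ∂P + (T (1 / 2) - b) := by
  have h : (fun x => T x - b) = fun x => r * (x - 1 / 2) + (T (1 / 2) - b) :=
    funext fun x => by linarith [hT x (1 / 2)]
  have hlin : Integrable (fun x : ℝ => x - 1 / 2) P :=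
    Continuous.integrable_of_ae_mem_Icc hP (by fun_prop)
  rw [h, integral_add (hlin.const_mul r) (integrable_const _), integral_const_mul, integral_const]
  simp

lemma integral_sq_sub_of_sub_eq_mul (hM : ∫ x, (x - 1 / 2) ∂P = 0) (b : ℝ) :
    ∫ x, (T x - b) ^ 2 ∂P = r ^ 2 * ∫ x, (x - 1 / 2) ^ 2 ∂P + (T (1 / 2) - b) ^ 2 := by
  set c := T (1 / 2) - b
  have h : (fun x => (T x - b) ^ 2)
      = fun x => r ^ 2 * (x - 1 / 2) ^ 2 + (2 * r * c * (x - 1 / 2) + c ^ 2) :=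
    funext fun x => by
      rw [show T x - b = r * (x - 1 / 2) + c by linarith [hT x (1 / 2)]]
      ring
  have hquad : Integrable (fun x : ℝ => (x - 1 / 2) ^ 2) P :=
    Continuous.integrable_of_ae_mem_Icc hP (by fun_prop)
  have hlin : Integrable (fun x : ℝ => x - 1 / 2) P :=
    Continuous.integrable_of_ae_mem_Icc hP (by fun_prop)
  have hrest : Integrable (fun x : ℝ => 2 * r * c * (x - 1 / 2) + c ^ 2) P :=
    Continuous.integrable_of_ae_mem_Icc hP (by fun_prop)
  rw [h, integral_add (hquad.const_mul _) hrest,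
    integral_add (hlin.const_mul _) (integrable_const _), integral_const_mul, integral_const_mul,
    hM, integral_const]
  simp

end SupportedOnUnitInterval

section SelfSimilar

variable {P : Measure ℝ} (hP : ∀ᵐ x ∂P, x ∈ Icc (0 : ℝ) 1) (hself : SelfSim P)
include hP hself

-- The first-level pieces `J_k` are disjoint, so only the `k = j` term of the self-similarity
-- equation charges `S_j(C)`.
lemma restrict_image_Smap {j : ℕ} (hj : 1 ≤ j) {C : Set ℝ} (hC : C ⊆ Icc 0 1) :
    P.restrict (Smap j '' C) = ENNReal.ofReal (prob j) • (P.restrict C).map (Smap j) := by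
  obtain ⟨i, rfl⟩ : ∃ i, j = i + 1 := ⟨j - 1, by omega⟩
  have hnull (k : ℕ) (hk : k ≠ i) : P.restrict (Smap (k + 1) ⁻¹' (Smap (i + 1) '' C)) = 0 := by
    refine Measure.restrict_eq_zero.mpr (measure_mono_null ?_ (ae_iff.mp hP))
    rintro x ⟨y, hy, hxy⟩ (hx : x ∈ Icc 0 1)
    exact (Jset_disjoint (by omega) (by omega) (by omega : i + 1 ≠ k + 1)).ne_of_mem
      ⟨y, hC hy, rfl⟩ ⟨x, hx, rfl⟩ hxy
  nth_rewrite 1 [hself.eq_sum_ofReal_prob]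
  simp only [Measure.restrict_sum_of_countable, Measure.restrict_smul,
    (measurableEmbedding_Smap _).restrict_map]
  rw [Measure.sum_eq_single i fun k hk => by rw [hnull k hk, Measure.map_zero, smul_zero],
    (measurableEmbedding_Smap _).injective.preimage_image]

lemma restrict_image_Sword {ω : List ℕ} (hω : ∀ i ∈ ω, 1 ≤ i) {C : Set ℝ} (hC : C ⊆ Icc 0 1) :
    P.restrict (Sword ω '' C) = ENNReal.ofReal (pword ω) • (P.restrict C).map (Sword ω) := by
  induction ω with
  | nil => simp [Sword, pword]
  | cons j ω ih =>
    have hω' : ∀ i ∈ ω, 1 ≤ i := fun i hi => hω i (List.mem_cons_of_mem j hi)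
    have hsub : Sword ω '' C ⊆ Icc 0 1 := image_subset_iff.mpr fun x hx => Sword_mem_Icc hω' (hC hx)
    rw [Sword, image_comp, restrict_image_Smap hP hself (hω j List.mem_cons_self) hsub, ih hω',
      Measure.map_smul, Measure.map_map (measurableEmbedding_Smap j).measurable
        (measurableEmbedding_Sword ω).measurable, smul_smul, ← ENNReal.ofReal_mul (prob_nonneg j)]
    simp [pword]

lemma restrict_iUnion_Jset_add (m : ℕ) :
    P.restrict (⋃ t : ℕ, Jset (m + (t + 1))) = ENNReal.ofReal (prob m) • P.map (tailMap m) := by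
  have hdisj : Pairwise (Function.onFun Disjoint fun t : ℕ => Jset (m + (t + 1))) := fun s t hst =>
    Jset_disjoint (by omega) (by omega) (by omega)
  have hmeas (t : ℕ) : MeasurableSet (Jset (m + (t + 1))) :=
    (measurableEmbedding_Smap _).measurableSet_image' measurableSet_Icc
  nth_rewrite 2 [hself.eq_sum_ofReal_prob]
  rw [Measure.restrict_iUnion hdisj hmeas, Measure.map_sum
    (measurableEmbedding_tailMap m).measurable.aemeasurable, Measure.smul_sum]
  refine Measure.sum_congr fun t => ?_
  have hS : Smap (m + (t + 1)) = tailMap m ∘ Smap (t + 1) := funext (Smap_add m (by omega))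
  rw [Jset, restrict_image_Smap hP hself (by omega) subset_rfl,
    Measure.restrict_eq_self_of_ae_mem hP, Measure.map_smul,
    Measure.map_map (measurableEmbedding_tailMap m).measurable (measurableEmbedding_Smap _).measurable,
    ← hS, smul_smul, ← ENNReal.ofReal_mul (prob_nonneg m), prob_add]

lemma restrict_JwordInf_concat {σ : List ℕ} (hσ : ∀ i ∈ σ, 1 ≤ i) (m : ℕ) :
    P.restrict (JwordInf (σ ++ [m]))
      = ENNReal.ofReal (pword σ * prob m) • P.map (Sword σ ∘ tailMap m) := by
  have hsub : ⋃ t : ℕ, Jset (m + (t + 1)) ⊆ Icc 0 1 :=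
    iUnion_subset fun t => image_subset_iff.mpr fun x hx => Smap_mem_Icc_zero_one (by omega) hx
  rw [JwordInf_concat, restrict_image_Sword hP hself hσ hsub, restrict_iUnion_Jset_add hP hself,
    Measure.map_smul, Measure.map_map (measurableEmbedding_Sword σ).measurable
      (measurableEmbedding_tailMap m).measurable, smul_smul, ← ENNReal.ofReal_mul (pword_nonneg σ)]

lemma hasSum_integral_comp_Smap [IsFiniteMeasure P] {f : ℝ → ℝ}
    (hf : Continuous f) :
    HasSum (fun j : ℕ => prob (j + 1) * ∫ x, f (Smap (j + 1) x) ∂P) (∫ x, f x ∂P) := by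
  have h := hasSum_integral_measure (f := f)
    (μ := fun j : ℕ => ENNReal.ofReal (prob (j + 1)) • P.map (Smap (j + 1)))
    (by rw [← hself.eq_sum_ofReal_prob]; exact hf.integrable_of_ae_mem_Icc hP)
  rw [← hself.eq_sum_ofReal_prob] at h
  simpa only [integral_ofReal_smul_map (measurableEmbedding_Smap _) (prob_nonneg _)] using h

lemma integral_sub_half [IsProbabilityMeasure P] : ∫ x, (x - 1 / 2) ∂P = 0 := by
  set M := ∫ x, (x - 1 / 2) ∂P with hM
  have h := hasSum_integral_comp_Smap hP hself (f := fun x => x - 1 / 2) (by fun_prop)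
  have hterm : (fun j : ℕ => prob (j + 1) * ∫ x, (Smap (j + 1) x - 1 / 2) ∂P)
      = fun j => (M - 5 / 2) * (2⁻¹ * 3⁻¹) ^ (j + 1) + 1 / 2 * 2⁻¹ ^ (j + 1) := funext fun j => by
    rw [integral_sub_of_sub_eq_mul hP (Smap_sub _), ← hM, Smap_half_sub_half, prob, srat, mul_pow]
    ring
  rw [hterm] at h
  have := h.unique (((hasSum_geometric_succ (by norm_num) (by norm_num)).mul_left (M - 5 / 2)).add
    ((hasSum_geometric_succ (by norm_num) (by norm_num)).mul_left (1 / 2)))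
  norm_num at this
  linarith

lemma integral_sq_sub_half [IsProbabilityMeasure P] : ∫ x, (x - 1 / 2) ^ 2 ∂P = 1 / 8 := by
  set V := ∫ x, (x - 1 / 2) ^ 2 ∂P with hV
  have h := hasSum_integral_comp_Smap hP hself (f := fun x => (x - 1 / 2) ^ 2) (by fun_prop)
  have hterm : (fun j : ℕ => prob (j + 1) * ∫ x, (Smap (j + 1) x - 1 / 2) ^ 2 ∂P)
      = fun j => (V + 25 / 4) * (2⁻¹ * 3⁻¹ ^ 2) ^ (j + 1) - 5 / 2 * (2⁻¹ * 3⁻¹) ^ (j + 1)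
          + 1 / 4 * 2⁻¹ ^ (j + 1) := funext fun j => by
    rw [integral_sq_sub_of_sub_eq_mul hP (Smap_sub _) (integral_sub_half hP hself),
      ← hV, Smap_half_sub_half, prob, srat]
    simp only [mul_pow, ← pow_mul]
    ring
  rw [hterm] at h
  have := h.unique ((((hasSum_geometric_succ (by norm_num) (by norm_num)).mul_left (V + 25 / 4)).sub
    ((hasSum_geometric_succ (by norm_num) (by norm_num)).mul_left (5 / 2))).add
    ((hasSum_geometric_succ (by norm_num) (by norm_num)).mul_left (1 / 4)))
  norm_num at this
  linarith

end SelfSimilar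

theorem error_of_aw_and_awInf (P : Measure ℝ) [IsProbabilityMeasure P]
    (hsupp : P (Set.Icc 0 1) = 1) (hself : SelfSim P) (ω : List ℕ) (hω : IsWord ω) :
    (∫ x in Jword ω, (x - aw ω) ^ 2 ∂P) = pword ω * sword ω ^ 2 * (1 / 8) ∧
    (∫ x in JwordInf ω, (x - awInf ω) ^ 2 ∂P) = pword ω * sword ω ^ 2 * (1 / 8) := by
  have hP : ∀ᵐ x ∂P, x ∈ Icc (0 : ℝ) 1 :=
    (ae_mem_iff_measure_eq measurableSet_Icc.nullMeasurableSet).mpr (by rw [hsupp, measure_univ])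
  have hM := integral_sub_half hP hself
  have hV := integral_sq_sub_half hP hself
  obtain ⟨hne, hletters⟩ := hω
  constructor
  · rw [Jword, restrict_image_Sword hP hself hletters subset_rfl,
      Measure.restrict_eq_self_of_ae_mem hP,
      integral_ofReal_smul_map (measurableEmbedding_Sword ω) (pword_nonneg ω), aw,
      integral_sq_sub_of_sub_eq_mul hP (Sword_sub ω) hM, hV]
    ring
  · obtain ⟨σ, m, rfl⟩ := (List.eq_nil_or_concat' ω).resolve_left hne
    have hσ : ∀ i ∈ σ, 1 ≤ i := fun i hi => hletters i (List.mem_append_left _ hi)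
    have hT : ∀ x y, (Sword σ ∘ tailMap m) x - (Sword σ ∘ tailMap m) y
        = sword σ * srat m * (x - y) := fun x y => by
      rw [Function.comp_apply, Function.comp_apply, Sword_sub, tailMap_sub, mul_assoc]
    rw [restrict_JwordInf_concat hP hself hσ m, integral_ofReal_smul_map
        ((measurableEmbedding_Sword σ).comp (measurableEmbedding_tailMap m))
        (mul_nonneg (pword_nonneg σ) (prob_nonneg m)),
      awInf_concat, integral_sq_sub_of_sub_eq_mul hP hT hM, hV, pword_concat, sword_concat,
      Function.comp_apply, sub_self]
    ring
end
end

section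
/- The set {1/6, 5/6} is the unique optimal set of two-means for P, and the second quantization error is V_2 = 1/72. That is, for every set α ⊂ ℝ with card(α) ≤ 2, ∫ min_{a∈α}(x−a)² dP(x) ≥ 1/72, with equality if and only if α = {1/6, 5/6}. -/
/-!
Since `S₁ x = x / 3` and `S_{j+1} = R ∘ S_j` with `R x = x / 3 + 2 / 3`, the self-similarity
equation collapses to `P = ½ L_*P + ½ R_*P` with `L x = x / 3`: `P` is the Cantor measure, so
`∫ x dP = 1/2` and `∫ x² dP = 3/8`.

For `a ≤ b` with midpoint `m`, put `p = P(X < m)` and `t = ∫_{X<m} x dP`. The error of `{a, b}` is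
`3/8 - (t²/p + (1/2 - t)²/(1 - p)) + (p a - t)²/p + ((1 - p) b - (1/2 - t))²/(1 - p)`:
`3/8` minus the second moment of the two centroids, plus squares that vanish exactly when `a` and
`b` are those centroids. For `m ∈ [1/3, 2/3]` one has `p = 1/2`, `t = 1/12`, and the centroid
moment is `13/36`. For `m < 1/3` (resp. `m > 2/3`) self-similarity expresses `p` and `t` through
the same quantities at `3m` (resp. `3m - 2`), where `0 ≤ t ≤ p`, `t ≤ 1/2`, `p - t ≤ 1/2` and
`0 < p < 1` make the centroid moment strictly smaller than `13/36`. Hence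
`V₂ = 3/8 - 13/36 = 1/72`, attained only at `{1/6, 5/6}`.
-/

open MeasureTheory Set
open scoped ENNReal

noncomputable section

lemma Continuous.integrable_of_ae_mem_Icc_s7 {E : Type*} [NormedAddCommGroup E] {μ : Measure ℝ}
    [IsLocallyFiniteMeasure μ] {a b : ℝ} (hμ : ∀ᵐ x ∂μ, x ∈ Icc a b) {g : ℝ → E}
    (hg : Continuous g) : Integrable g μ := by
  rw [← Measure.restrict_eq_self_of_ae_mem hμ]
  exact hg.integrableOn_Icc

lemma forall_of_forall_one_le_of_three_mul {Q : ℝ → Prop} (hbase : ∀ d, 1 ≤ d → Q d)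
    (hstep : ∀ d, Q (3 * d) → Q d) {d : ℝ} (hd : 0 < d) : Q d := by
  obtain ⟨k, hk⟩ := exists_pow_lt_of_lt_one hd (by norm_num : (1 / 3 : ℝ) < 1)
  induction k generalizing d with
  | zero => exact hbase d (by simpa using hk.le)
  | succ k ih => exact hstep d (ih (by positivity) (by rw [pow_succ] at hk; linarith))

lemma mul_sq_sub_add_sq_div {p t : ℝ} (ht : p = 0 → t = 0) (a : ℝ) :
    p * a ^ 2 - 2 * a * t + t ^ 2 / p = (p * a - t) ^ 2 / p := by
  rcases eq_or_ne p 0 with rfl | hp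
  · simp [ht rfl]
  · field_simp
    ring

lemma sInf_image_sq_sub_pair {a b : ℝ} (hab : a ≤ b) (x : ℝ) :
    sInf ((fun c => (x - c) ^ 2) '' {a, b}) = (x - b) ^ 2 +
      (Iio ((a + b) / 2)).indicator (fun x => 2 * (b - a) * x - (b ^ 2 - a ^ 2)) x := by
  rw [image_pair, csInf_pair]
  rcases lt_or_ge x ((a + b) / 2) with hx | hx
  · have : (x - a) ^ 2 ≤ (x - b) ^ 2 := by
      nlinarith [mul_nonneg (sub_nonneg.2 hab) (by linarith : 0 ≤ a + b - 2 * x)]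
    rw [indicator_of_mem (show x ∈ Iio ((a + b) / 2) from hx), inf_eq_left.2 this]
    ring
  · have : (x - b) ^ 2 ≤ (x - a) ^ 2 := by
      nlinarith [mul_nonneg (sub_nonneg.2 hab) (by linarith : 0 ≤ 2 * x - (a + b))]
    rw [indicator_of_notMem (show x ∉ Iio ((a + b) / 2) from not_lt.2 hx), inf_eq_right.2 this]
    ring

lemma Set.pair_eq_pair_iff_of_le_of_lt {α : Type*} [LinearOrder α] {a b c d : α} (hab : a ≤ b)
    (hcd : c < d) : ({a, b} : Set α) = {c, d} ↔ a = c ∧ b = d := by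
  rw [Set.pair_eq_pair_iff]
  refine ⟨fun h => h.resolve_right ?_, .inl⟩
  rintro ⟨rfl, rfl⟩
  exact hab.not_gt hcd

lemma Set.exists_eq_pair_of_ncard_le_two {α : Type*} [LinearOrder α] {A : Set α}
    (hfin : A.Finite) (hne : A.Nonempty) (hcard : A.ncard ≤ 2) : ∃ a b, a ≤ b ∧ A = {a, b} := by
  have hpos : 0 < A.ncard := (Set.ncard_pos hfin).2 hne
  interval_cases h : A.ncard
  · obtain ⟨a, rfl⟩ := Set.ncard_eq_one.1 h
    exact ⟨a, a, le_rfl, (Set.pair_eq_singleton a).symm⟩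
  · obtain ⟨a, b, -, rfl⟩ := Set.ncard_eq_two.1 h
    rcases le_total a b with hab | hba
    exacts [⟨a, b, hab, rfl⟩, ⟨b, a, hba, Set.pair_comm a b⟩]

/-- With `p = P(X < m)`, `t = ∫_{X<m} x dP` and `∫ x dP = 1/2`, this is `p c₁² + (1 - p) c₂²` for
the centroids `c₁ = t / p`, `c₂ = (1/2 - t) / (1 - p)` of the two sides of `m`. When `p = 0` or
`p = 1` the junk value `0 / 0 = 0` still gives the right value `1/4`. -/
def centroidMoment (p t : ℝ) : ℝ := t ^ 2 / p + (1 / 2 - t) ^ 2 / (1 - p)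

lemma centroidMoment_lt_of_left {q s : ℝ} (hq0 : 0 < q) (hq1 : q < 1) (hs0 : 0 ≤ s)
    (hsq : s ≤ q) (hs : s ≤ 1 / 2) (hqs : q - s ≤ 1 / 2) :
    centroidMoment (q / 2) (s / 6) < 13 / 36 := by
  -- After clearing denominators, `72 ×` the gap is
  -- `3/2 q(1-q) + s(1/2-s) + 4 s(1/2-q+s) + 5 (q-s)(1/2-q+s)`.
  rw [centroidMoment, div_add_div _ _ (by positivity) (by linarith), div_lt_iff₀ (by nlinarith)]
  nlinarith [mul_pos hq0 (sub_pos.2 hq1), mul_nonneg hs0 (sub_nonneg.2 hs),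
    mul_nonneg hs0 (by linarith : 0 ≤ 1 / 2 - q + s),
    mul_nonneg (sub_nonneg.2 hsq) (by linarith : 0 ≤ 1 / 2 - q + s)]

lemma centroidMoment_lt_of_right {q s : ℝ} (hq0 : 0 < q) (hq1 : q < 1) (hs0 : 0 ≤ s)
    (hsq : s ≤ q) (hs : s ≤ 1 / 2) (hqs : q - s ≤ 1 / 2) :
    centroidMoment ((1 + q) / 2) ((1 + 2 * s + 4 * q) / 12) < 13 / 36 := by
  -- After clearing denominators, `288 ×` the gap is
  -- `6 q(1-q) + 20 s(1/2-s) + 16 s(1/2-q+s) + 4 (q-s)(1/2-q+s)`.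
  rw [centroidMoment, div_add_div _ _ (by positivity) (by linarith), div_lt_iff₀ (by nlinarith)]
  nlinarith [mul_pos hq0 (sub_pos.2 hq1), mul_nonneg hs0 (sub_nonneg.2 hs),
    mul_nonneg hs0 (by linarith : 0 ≤ 1 / 2 - q + s),
    mul_nonneg (sub_nonneg.2 hsq) (by linarith : 0 ≤ 1 / 2 - q + s)]

def cantorL (x : ℝ) : ℝ := x / 3

def cantorR (x : ℝ) : ℝ := x / 3 + 2 / 3

def cantorHutchinson (μ : Measure ℝ) : Measure ℝ :=
  (2⁻¹ : ℝ≥0∞) • μ.map cantorL + (2⁻¹ : ℝ≥0∞) • μ.map cantorR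

lemma measurable_cantorL : Measurable cantorL := by unfold cantorL; fun_prop

lemma measurable_cantorR : Measurable cantorR := by unfold cantorR; fun_prop

lemma Smap_one : Smap 1 = cantorL := by
  funext x; simp [Smap, cantorL]

lemma Smap_succ_succ (j : ℕ) : Smap (j + 2) = cantorR ∘ Smap (j + 1) := by
  funext x
  simp only [Smap, cantorR, Function.comp_apply, show j + 2 - 1 = j + 1 by omega,
    Nat.add_sub_cancel, pow_succ]
  field_simp
  ring

lemma SelfSim.cantorHutchinson_eq {P : Measure ℝ} (h : SelfSim P) : cantorHutchinson P = P := by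
  have expand : ∀ s, MeasurableSet s →
      P s = ∑' j : ℕ, ((2 : ℝ≥0∞) ^ (j + 1))⁻¹ * P (Smap (j + 1) ⁻¹' s) := fun s hs => by
    conv_lhs => rw [h]
    simp [Measure.sum_apply _ hs, Measure.map_apply (measurable_Smap _) hs]
  ext s hs
  simp only [cantorHutchinson, Measure.add_apply, Measure.smul_apply, smul_eq_mul,
    Measure.map_apply measurable_cantorL hs, Measure.map_apply measurable_cantorR hs]
  rw [expand s hs, tsum_eq_zero_add' ENNReal.summable,
    expand _ (hs.preimage measurable_cantorR), ← ENNReal.tsum_mul_left]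
  congr 1
  · simp [Smap_one]
  · congr 1
    funext j
    rw [Smap_succ_succ, preimage_comp, pow_succ _ (j + 1), ENNReal.mul_inv (by simp) (by simp)]
    ring

def lowerMass (P : Measure ℝ) (m : ℝ) : ℝ := P.real (Iio m)

def lowerMoment (P : Measure ℝ) (m : ℝ) : ℝ := ∫ x in Iio m, x ∂P

section CantorMeasure

variable {P : Measure ℝ}

lemma integral_eq_of_cantorHutchinson_eq (hP : cantorHutchinson P = P) {g : ℝ → ℝ}
    (hg : Integrable g P) :
    ∫ x, g x ∂P = (∫ x, g (cantorL x) ∂P + ∫ x, g (cantorR x) ∂P) / 2 := by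
  have hL : Integrable g (P.map cantorL) :=
    (integrable_smul_measure (c := 2⁻¹) (by simp) (by simp)).1 <|
      hg.mono_measure ((Measure.le_add_right le_rfl).trans hP.le)
  have hR : Integrable g (P.map cantorR) :=
    (integrable_smul_measure (c := 2⁻¹) (by simp) (by simp)).1 <|
      hg.mono_measure ((Measure.le_add_left le_rfl).trans hP.le)
  conv_lhs => rw [← hP]
  rw [cantorHutchinson, integral_add_measure (hL.smul_measure (by simp))
      (hR.smul_measure (by simp)), integral_smul_measure, integral_smul_measure,
    integral_map measurable_cantorL.aemeasurable hL.1,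
    integral_map measurable_cantorR.aemeasurable hR.1]
  simp only [ENNReal.toReal_inv, ENNReal.toReal_ofNat, smul_eq_mul]
  ring

lemma lower_of_nonpos (h01 : ∀ᵐ x ∂P, x ∈ Icc (0 : ℝ) 1) {m : ℝ} (hm : m ≤ 0) :
    lowerMass P m = 0 ∧ lowerMoment P m = 0 := by
  have hnull : P (Iio m) = 0 := measure_eq_zero_iff_ae_notMem.2 <| h01.mono fun x hx hxm =>
    (lt_of_lt_of_le (mem_Iio.1 hxm) hm).not_ge hx.1
  simp [lowerMass, lowerMoment, Measure.real, hnull, Measure.restrict_eq_zero.2 hnull]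

variable [IsProbabilityMeasure P]

lemma integral_id_of_cantor (hP : cantorHutchinson P = P) (h01 : ∀ᵐ x ∂P, x ∈ Icc (0 : ℝ) 1) :
    ∫ x, x ∂P = 1 / 2 := by
  have int {g : ℝ → ℝ} (hg : Continuous g) : Integrable g P := hg.integrable_of_ae_mem_Icc_s7 h01
  have h := integral_eq_of_cantorHutchinson_eq hP (g := fun x => x) (int continuous_id)
  simp only [cantorL, cantorR] at h
  rw [integral_add (int (by fun_prop)) (int (by fun_prop)), integral_div, integral_const] at h
  simp only [probReal_univ, smul_eq_mul, one_mul] at h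
  linarith

lemma integral_sq_of_cantor (hP : cantorHutchinson P = P) (h01 : ∀ᵐ x ∂P, x ∈ Icc (0 : ℝ) 1) :
    ∫ x, x ^ 2 ∂P = 3 / 8 := by
  have int {g : ℝ → ℝ} (hg : Continuous g) : Integrable g P := hg.integrable_of_ae_mem_Icc_s7 h01
  have h := integral_eq_of_cantorHutchinson_eq hP (g := fun x => x ^ 2) (int (by fun_prop))
  have hL : ∀ x, cantorL x ^ 2 = x ^ 2 / 9 := fun x => by simp only [cantorL]; ring
  have hR : ∀ x, cantorR x ^ 2 = x ^ 2 / 9 + (4 / 9 * x + 4 / 9) := fun x => by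
    simp only [cantorR]; ring
  simp only [hL, hR] at h
  rw [integral_add (int (by fun_prop)) (int (by fun_prop)),
    integral_add (int (by fun_prop)) (int (by fun_prop)), integral_div, integral_const_mul,
    integral_const, integral_id_of_cantor hP h01] at h
  simp only [probReal_univ, smul_eq_mul, one_mul] at h
  linarith

lemma integral_sq_sub_of_cantor (hP : cantorHutchinson P = P)
    (h01 : ∀ᵐ x ∂P, x ∈ Icc (0 : ℝ) 1) (b : ℝ) :
    ∫ x, (x - b) ^ 2 ∂P = 3 / 8 - b + b ^ 2 := by
  have int {g : ℝ → ℝ} (hg : Continuous g) : Integrable g P := hg.integrable_of_ae_mem_Icc_s7 h01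
  have hexpand : ∀ x, (x - b) ^ 2 = x ^ 2 - 2 * b * x + b ^ 2 := fun x => by ring
  simp only [hexpand]
  rw [integral_add (int (by fun_prop)) (int (by fun_prop)),
    integral_sub (int (by fun_prop)) (int (by fun_prop)), integral_const_mul,
    integral_sq_of_cantor hP h01, integral_id_of_cantor hP h01, integral_const]
  simp only [probReal_univ, smul_eq_mul, one_mul]
  ring

lemma setIntegral_Iio_of_cantor (hP : cantorHutchinson P = P)
    (h01 : ∀ᵐ x ∂P, x ∈ Icc (0 : ℝ) 1) {g : ℝ → ℝ} (hg : Continuous g) (m : ℝ) :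
    ∫ x in Iio m, g x ∂P =
      (∫ x in Iio (3 * m), g (cantorL x) ∂P + ∫ x in Iio (3 * m - 2), g (cantorR x) ∂P) / 2 := by
  have h := integral_eq_of_cantorHutchinson_eq hP
    ((hg.integrable_of_ae_mem_Icc_s7 h01).indicator (measurableSet_Iio (a := m)))
  have hL : cantorL ⁻¹' Iio m = Iio (3 * m) := by
    ext x; simp only [cantorL, mem_preimage, mem_Iio]; constructor <;> intro <;> linarith
  have hR : cantorR ⁻¹' Iio m = Iio (3 * m - 2) := by
    ext x; simp only [cantorR, mem_preimage, mem_Iio]; constructor <;> intro <;> linarith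
  simp only [← indicator_comp_right, hL, hR, Function.comp_def] at h
  simpa only [integral_indicator measurableSet_Iio] using h

lemma lowerMass_eq_of_cantor (hP : cantorHutchinson P = P)
    (h01 : ∀ᵐ x ∂P, x ∈ Icc (0 : ℝ) 1) (m : ℝ) :
    lowerMass P m = (lowerMass P (3 * m) + lowerMass P (3 * m - 2)) / 2 := by
  simpa [lowerMass] using setIntegral_Iio_of_cantor hP h01 continuous_const (g := fun _ => 1) m

lemma lowerMoment_eq_of_cantor (hP : cantorHutchinson P = P)
    (h01 : ∀ᵐ x ∂P, x ∈ Icc (0 : ℝ) 1) (m : ℝ) :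
    lowerMoment P m =
      lowerMoment P (3 * m) / 6 + lowerMoment P (3 * m - 2) / 6 + lowerMass P (3 * m - 2) / 3 := by
  have hid : Integrable (fun x : ℝ => x) P := continuous_id.integrable_of_ae_mem_Icc_s7 h01
  have h := setIntegral_Iio_of_cantor hP h01 continuous_id m
  simp only [id, cantorL, cantorR] at h
  rw [integral_div, integral_add (hid.integrableOn.div_const 3) (integrable_const _).integrableOn,
    integral_div, setIntegral_const] at h
  simp only [lowerMoment, lowerMass, h, smul_eq_mul]
  ring

lemma lower_of_one_lt (hP : cantorHutchinson P = P) (h01 : ∀ᵐ x ∂P, x ∈ Icc (0 : ℝ) 1)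
    {m : ℝ} (hm : 1 < m) : lowerMass P m = 1 ∧ lowerMoment P m = 1 / 2 := by
  have hfull : P.restrict (Iio m) = P := Measure.restrict_eq_self_of_ae_mem <|
    h01.mono fun x hx => mem_Iio.2 (hx.2.trans_lt hm)
  rw [lowerMass, lowerMoment, ← measureReal_restrict_apply_univ, hfull]
  exact ⟨probReal_univ, integral_id_of_cantor hP h01⟩

lemma lower_of_one_le (hP : cantorHutchinson P = P) (h01 : ∀ᵐ x ∂P, x ∈ Icc (0 : ℝ) 1)
    {m : ℝ} (hm : 1 ≤ m) : lowerMass P m = 1 ∧ lowerMoment P m = 1 / 2 := by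
  rcases hm.lt_or_eq with hm | rfl
  · exact lower_of_one_lt hP h01 hm
  -- At `m = 1` the recursion reads `P(X < 1) = (1 + P(X < 1)) / 2`: there is no atom at `1`.
  have hmass := lowerMass_eq_of_cantor hP h01 1
  have hmoment := lowerMoment_eq_of_cantor hP h01 1
  obtain ⟨hmass3, hmoment3⟩ := lower_of_one_lt hP h01 (by norm_num : (1 : ℝ) < 3 * 1)
  norm_num at hmass hmoment hmass3 hmoment3
  rw [hmass3] at hmass
  have hmass1 : lowerMass P 1 = 1 := by linarith
  rw [hmoment3, hmass1] at hmoment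
  exact ⟨hmass1, by linarith⟩

lemma lower_of_mem_Icc (hP : cantorHutchinson P = P) (h01 : ∀ᵐ x ∂P, x ∈ Icc (0 : ℝ) 1)
    {m : ℝ} (hm : m ∈ Icc (1 / 3 : ℝ) (2 / 3)) :
    lowerMass P m = 1 / 2 ∧ lowerMoment P m = 1 / 12 := by
  obtain ⟨hmassL, hmomentL⟩ := lower_of_one_le hP h01 (by linarith [hm.1] : 1 ≤ 3 * m)
  obtain ⟨hmassR, hmomentR⟩ := lower_of_nonpos h01 (by linarith [hm.2] : 3 * m - 2 ≤ 0)
  rw [lowerMass_eq_of_cantor hP h01, lowerMoment_eq_of_cantor hP h01, hmassL, hmomentL,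
    hmassR, hmomentR]
  norm_num

lemma lowerMoment_bounds (hP : cantorHutchinson P = P) (h01 : ∀ᵐ x ∂P, x ∈ Icc (0 : ℝ) 1)
    (m : ℝ) : 0 ≤ lowerMoment P m ∧ lowerMoment P m ≤ lowerMass P m ∧
      lowerMoment P m ≤ 1 / 2 ∧ lowerMass P m - lowerMoment P m ≤ 1 / 2 := by
  have int {g : ℝ → ℝ} (hg : Continuous g) : Integrable g P := hg.integrable_of_ae_mem_Icc_s7 h01
  have hid : Integrable (fun x : ℝ => x) P := int continuous_id
  have hmean := integral_id_of_cantor hP h01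
  have hcomp : lowerMass P m - lowerMoment P m = ∫ x in Iio m, (1 - x) ∂P := by
    rw [integral_sub (integrable_const _).integrableOn hid.integrableOn,
      setIntegral_const, lowerMass, lowerMoment, smul_eq_mul, mul_one]
  have hcompl : ∫ x in Iio m, (1 - x) ∂P ≤ ∫ x, (1 - x) ∂P :=
    setIntegral_le_integral (int (by fun_prop)) (h01.mono fun x hx => sub_nonneg.2 hx.2)
  rw [integral_sub (integrable_const _) hid, hmean, integral_const, probReal_univ, one_smul]
    at hcompl
  refine ⟨setIntegral_nonneg_ae measurableSet_Iio (h01.mono fun x hx _ => hx.1), ?_,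
    hmean ▸ setIntegral_le_integral hid (h01.mono fun x hx => hx.1), ?_⟩
  · rw [← sub_nonneg, hcomp]
    exact setIntegral_nonneg_ae measurableSet_Iio (h01.mono fun x hx _ => sub_nonneg.2 hx.2)
  · linarith

lemma lowerMass_pos (hP : cantorHutchinson P = P) (h01 : ∀ᵐ x ∂P, x ∈ Icc (0 : ℝ) 1)
    {m : ℝ} (hm : 0 < m) : 0 < lowerMass P m := by
  refine forall_of_forall_one_le_of_three_mul (Q := fun d => 0 < lowerMass P d)
    (fun d hd => ?_) (fun d hd => ?_) hm
  · rw [(lower_of_one_le hP h01 hd).1]; exact one_pos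
  · have : 0 ≤ lowerMass P (3 * d - 2) := measureReal_nonneg
    rw [lowerMass_eq_of_cantor hP h01]
    linarith

lemma lowerMass_lt_one (hP : cantorHutchinson P = P) (h01 : ∀ᵐ x ∂P, x ∈ Icc (0 : ℝ) 1)
    {m : ℝ} (hm : m < 1) : lowerMass P m < 1 := by
  have key : lowerMass P (1 - (1 - m)) < 1 := by
    refine forall_of_forall_one_le_of_three_mul (Q := fun d => lowerMass P (1 - d) < 1)
      (fun d hd => ?_) (fun d hd => ?_) (sub_pos.2 hm)
    · rw [(lower_of_nonpos h01 (by linarith : 1 - d ≤ 0)).1]; exact one_pos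
    · have : lowerMass P (3 * (1 - d)) ≤ 1 := measureReal_le_one
      rw [lowerMass_eq_of_cantor hP h01, show 3 * (1 - d) - 2 = 1 - 3 * d by ring]
      linarith
  simpa using key

lemma centroidMoment_lower_lt_of_notMem (hP : cantorHutchinson P = P)
    (h01 : ∀ᵐ x ∂P, x ∈ Icc (0 : ℝ) 1) {m : ℝ} (hm : m ∉ Icc (1 / 3 : ℝ) (2 / 3)) :
    centroidMoment (lowerMass P m) (lowerMoment P m) < 13 / 36 := by
  rcases le_or_gt m 0 with hm0 | hm0
  · rw [(lower_of_nonpos h01 hm0).1, (lower_of_nonpos h01 hm0).2]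
    norm_num [centroidMoment]
  rcases le_or_gt 1 m with hm1 | hm1
  · rw [(lower_of_one_le hP h01 hm1).1, (lower_of_one_le hP h01 hm1).2]
    norm_num [centroidMoment]
  rcases lt_or_ge m (1 / 3) with hm3 | hm3
  · obtain ⟨hmass, hmoment⟩ := lower_of_nonpos h01 (by linarith : 3 * m - 2 ≤ 0)
    obtain ⟨hs0, hsq, hs, hqs⟩ := lowerMoment_bounds hP h01 (3 * m)
    rw [lowerMass_eq_of_cantor hP h01, lowerMoment_eq_of_cantor hP h01, hmass, hmoment,
      add_zero, zero_div, add_zero, zero_div, add_zero]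
    exact centroidMoment_lt_of_left (lowerMass_pos hP h01 (by linarith))
      (lowerMass_lt_one hP h01 (by linarith)) hs0 hsq hs hqs
  · have hm2 : 2 / 3 < m := by
      by_contra! hm2
      exact hm ⟨hm3, hm2⟩
    obtain ⟨hmass, hmoment⟩ := lower_of_one_le hP h01 (by linarith : 1 ≤ 3 * m)
    obtain ⟨hs0, hsq, hs, hqs⟩ := lowerMoment_bounds hP h01 (3 * m - 2)
    have hrescaled := centroidMoment_lt_of_right (lowerMass_pos hP h01 (by linarith))
      (lowerMass_lt_one hP h01 (by linarith)) hs0 hsq hs hqs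
    rw [lowerMass_eq_of_cantor hP h01, lowerMoment_eq_of_cantor hP h01, hmass, hmoment]
    convert hrescaled using 2
    ring

lemma err_pair_eq (hP : cantorHutchinson P = P) (h01 : ∀ᵐ x ∂P, x ∈ Icc (0 : ℝ) 1)
    {a b : ℝ} (hab : a ≤ b) :
    err P {a, b} = 3 / 8 - centroidMoment (lowerMass P ((a + b) / 2)) (lowerMoment P ((a + b) / 2))
      + (lowerMass P ((a + b) / 2) * a - lowerMoment P ((a + b) / 2)) ^ 2
        / lowerMass P ((a + b) / 2)
      + ((1 - lowerMass P ((a + b) / 2)) * b - (1 / 2 - lowerMoment P ((a + b) / 2))) ^ 2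
        / (1 - lowerMass P ((a + b) / 2)) := by
  set m := (a + b) / 2
  set p := lowerMass P m
  set t := lowerMoment P m
  have int {g : ℝ → ℝ} (hg : Continuous g) : Integrable g P := hg.integrable_of_ae_mem_Icc_s7 h01
  have hsplit : err P {a, b} =
      3 / 8 + (p * a ^ 2 - 2 * a * t) + ((1 - p) * b ^ 2 - 2 * b * (1 / 2 - t)) := by
    rw [err]
    simp only [sInf_image_sq_sub_pair hab]
    rw [integral_add (int (by fun_prop)) ((int (by fun_prop)).indicator measurableSet_Iio),
      integral_indicator measurableSet_Iio, integral_sub (int (by fun_prop)).integrableOn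
        (integrable_const _).integrableOn, integral_const_mul, setIntegral_const,
      integral_sq_sub_of_cantor hP h01]
    simp only [p, t, lowerMass, lowerMoment, smul_eq_mul]
    ring
  obtain ⟨ht0, htp, ht, hpt⟩ := lowerMoment_bounds hP h01 m
  rw [hsplit, ← mul_sq_sub_add_sq_div (fun hp => by linarith) a,
    ← mul_sq_sub_add_sq_div (fun hp => by linarith) b, centroidMoment]
  ring

lemma le_err_pair_and_eq_iff (hP : cantorHutchinson P = P)
    (h01 : ∀ᵐ x ∂P, x ∈ Icc (0 : ℝ) 1) {a b : ℝ} (hab : a ≤ b) :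
    1 / 72 ≤ err P {a, b} ∧ (err P {a, b} = 1 / 72 ↔ a = 1 / 6 ∧ b = 5 / 6) := by
  have hE := err_pair_eq hP h01 hab
  set m := (a + b) / 2 with hm
  by_cases hmid : m ∈ Icc (1 / 3 : ℝ) (2 / 3)
  · obtain ⟨hp, ht⟩ := lower_of_mem_Icc hP h01 hmid
    have hcentered : err P {a, b} = 1 / 72 + ((a - 1 / 6) ^ 2 + (b - 5 / 6) ^ 2) / 2 := by
      rw [hE, hp, ht, centroidMoment]
      ring
    rw [hcentered]
    refine ⟨le_add_of_nonneg_right (by positivity), fun h => ?_, fun ⟨ha, hb⟩ => ?_⟩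
    · obtain ⟨ha, hb⟩ := (add_eq_zero_iff_of_nonneg (sq_nonneg _) (sq_nonneg _)).1
        (by linarith : (a - 1 / 6) ^ 2 + (b - 5 / 6) ^ 2 = 0)
      exact ⟨by linarith [pow_eq_zero_iff two_ne_zero |>.1 ha],
        by linarith [pow_eq_zero_iff two_ne_zero |>.1 hb]⟩
    · rw [ha, hb]
      norm_num
  · have hX : 0 ≤ (lowerMass P m * a - lowerMoment P m) ^ 2 / lowerMass P m :=
      div_nonneg (sq_nonneg _) measureReal_nonneg
    have hY : 0 ≤ ((1 - lowerMass P m) * b - (1 / 2 - lowerMoment P m)) ^ 2 / (1 - lowerMass P m) :=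
      div_nonneg (sq_nonneg _) (sub_nonneg.2 measureReal_le_one)
    have hgt : 1 / 72 < err P {a, b} := by
      linarith [centroidMoment_lower_lt_of_notMem hP h01 hmid]
    refine ⟨hgt.le, fun h => absurd h hgt.ne', ?_⟩
    rintro ⟨rfl, rfl⟩
    exact (hmid (by norm_num [hm])).elim

end CantorMeasure

theorem optimal_two_means (P : Measure ℝ) [IsProbabilityMeasure P]
    (hsupp : P (Set.Icc 0 1) = 1) (hself : SelfSim P) :
    quantErr P 2 = 1 / 72 ∧
    ∀ A : Set ℝ, A.Finite → A.Nonempty → A.ncard ≤ 2 →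
      1 / 72 ≤ err P A ∧ (err P A = 1 / 72 ↔ A = {1 / 6, 5 / 6}) := by
  have hP := hself.cantorHutchinson_eq
  have h01 : ∀ᵐ x ∂P, x ∈ Icc (0 : ℝ) 1 :=
    mem_ae_iff.2 ((prob_compl_eq_zero_iff measurableSet_Icc).2 hsupp)
  have hbound : ∀ A : Set ℝ, A.Finite → A.Nonempty → A.ncard ≤ 2 →
      1 / 72 ≤ err P A ∧ (err P A = 1 / 72 ↔ A = {1 / 6, 5 / 6}) := by
    intro A hfin hne hcard
    obtain ⟨a, b, hab, rfl⟩ := Set.exists_eq_pair_of_ncard_le_two hfin hne hcard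
    rw [Set.pair_eq_pair_iff_of_le_of_lt hab (by norm_num)]
    exact le_err_pair_and_eq_iff hP h01 hab
  have hopt : err P {1 / 6, 5 / 6} = 1 / 72 :=
    (le_err_pair_and_eq_iff hP h01 (by norm_num)).2.2 ⟨rfl, rfl⟩
  refine ⟨IsLeast.csInf_eq ⟨⟨{1 / 6, 5 / 6}, toFinite _, insert_nonempty _ _,
    (ncard_pair (by norm_num)).le, hopt.symm⟩, ?_⟩, hbound⟩
  rintro v ⟨A, hfin, hne, hcard, rfl⟩
  exact (hbound A hfin hne hcard).1

end
end
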